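/- arXiv:1203.5623 — 5 statements merged into one kernel-verified Lean document; each statement's English description precedes it below -/
import Mathlib

section
/- Let k : ℝ → ℝ be a smooth function and consider a plane curve (x(t), y(t), φ(t)) satisfying ẋ = cos φ, ẏ = sin φ, φ̇ = k(x² + y²). Define x̄ = x cos φ + y sin φ and ȳ = -x sin φ + y cos φ. Then x̄² + ȳ² = x² + y², and the pair (x̄, ȳ) satisfies the system dx̄/dt = 1 + ȳ·k(x̄² + ȳ²), dȳ/dt = -x̄·k(x̄² + ȳ²). -/
/-- A plane curve with ẋ = cos φ, ẏ = sin φ, φ̇ = k(x²+y²).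
In the rotating frame x̄ = x cos φ + y sin φ, ȳ = -x sin φ + y cos φ, one has
x̄² + ȳ² = x² + y² and dx̄/dt = 1 + ȳ·k(x̄²+ȳ²), dȳ/dt = -x̄·k(x̄²+ȳ²). -/
theorem stmt0 (k : ℝ → ℝ) (hk : ContDiff ℝ (⊤ : ℕ∞) k)
    (x y φ : ℝ → ℝ)
    (hx : ∀ t, HasDerivAt x (Real.cos (φ t)) t)
    (hy : ∀ t, HasDerivAt y (Real.sin (φ t)) t)
    (hφ : ∀ t, HasDerivAt φ (k ((x t) ^ 2 + (y t) ^ 2)) t)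
    (xb yb : ℝ → ℝ)
    (hxb : xb = fun t => x t * Real.cos (φ t) + y t * Real.sin (φ t))
    (hyb : yb = fun t => -(x t) * Real.sin (φ t) + y t * Real.cos (φ t)) :
    ∀ t, (xb t) ^ 2 + (yb t) ^ 2 = (x t) ^ 2 + (y t) ^ 2 ∧
      HasDerivAt xb (1 + yb t * k ((xb t) ^ 2 + (yb t) ^ 2)) t ∧
      HasDerivAt yb (-(xb t) * k ((xb t) ^ 2 + (yb t) ^ 2)) t := by
  have hr : ∀ t, (xb t) ^ 2 + (yb t) ^ 2 = (x t) ^ 2 + (y t) ^ 2 := by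
    intro t
    have := Real.sin_sq_add_cos_sq (φ t)
    simp only [hxb, hyb]
    nlinarith [this]
  intro t
  refine ⟨hr t, ?_, ?_⟩
  · have hc : HasDerivAt (fun t => Real.cos (φ t))
        (-Real.sin (φ t) * k ((x t) ^ 2 + (y t) ^ 2)) t := (hφ t).cos
    have hs : HasDerivAt (fun t => Real.sin (φ t))
        (Real.cos (φ t) * k ((x t) ^ 2 + (y t) ^ 2)) t := (hφ t).sin
    have h : HasDerivAt (fun t => x t * Real.cos (φ t) + y t * Real.sin (φ t)) _ t :=
      ((hx t).mul hc).add ((hy t).mul hs)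
    rw [← hxb] at h
    convert h using 1
    rw [hr t, hyb]
    beta_reduce
    have := Real.sin_sq_add_cos_sq (φ t)
    nlinarith [this]
  · have hc : HasDerivAt (fun t => Real.cos (φ t))
        (-Real.sin (φ t) * k ((x t) ^ 2 + (y t) ^ 2)) t := (hφ t).cos
    have hs : HasDerivAt (fun t => Real.sin (φ t))
        (Real.cos (φ t) * k ((x t) ^ 2 + (y t) ^ 2)) t := (hφ t).sin
    have h := (((hx t).neg).mul hs).add ((hy t).mul hc)
    have h' : HasDerivAt yb (-Real.cos (φ t) * Real.sin (φ t) +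
        -x t * (Real.cos (φ t) * k ((x t) ^ 2 + (y t) ^ 2)) +
        (Real.sin (φ t) * Real.cos (φ t) +
        y t * (-Real.sin (φ t) * k ((x t) ^ 2 + (y t) ^ 2)))) t := by
      rw [hyb]; exact h
    convert h' using 1
    rw [hr t, hxb]
    ring
end

section
/- Let λ, μ, φ be differentiable real functions satisfying λ̇ = p₆ sin φ, μ̇ = p₆ cos φ, and φ̈ = λ sin φ + μ cos φ, where p₆ ≠ 0 is a constant. Then d/dt[φ̇ - (λ² + μ²)/(2p₆)] = 0, i.e., φ̇ = K + (λ² + μ²)/(2p₆) for some constant K. -/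
/-! Since `λ̇ = p₆ sin φ` and `μ̇ = p₆ cos φ`, the derivative of `(λ² + μ²)/(2p₆)` is
`λ sin φ + μ cos φ = φ̈`, so `φ̇ - (λ² + μ²)/(2p₆)` has zero derivative and is constant. -/

theorem hasDerivAt_sq_add_sq_div_two_mul {f g : ℝ → ℝ} {c u v t : ℝ} (hc : c ≠ 0)
    (hf : HasDerivAt f (c * u) t) (hg : HasDerivAt g (c * v) t) :
    HasDerivAt (fun s => (f s ^ 2 + g s ^ 2) / (2 * c)) (f t * u + g t * v) t := by
  refine (((hf.fun_pow 2).fun_add (hg.fun_pow 2)).div_const (2 * c)).congr_deriv ?_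
  push_cast
  field_simp

theorem stmt4_general (p₆ : ℝ) (hp₆ : p₆ ≠ 0) (lam mu φ : ℝ → ℝ)
    (hlam : ∀ t, HasDerivAt lam (p₆ * Real.sin (φ t)) t)
    (hmu : ∀ t, HasDerivAt mu (p₆ * Real.cos (φ t)) t)
    (hφ2 : ∀ t, HasDerivAt (deriv φ) (lam t * Real.sin (φ t) + mu t * Real.cos (φ t)) t) :
    (∀ t, HasDerivAt (fun s => deriv φ s - ((lam s) ^ 2 + (mu s) ^ 2) / (2 * p₆)) 0 t) ∧
    ∃ K : ℝ, ∀ t, deriv φ t = K + ((lam t) ^ 2 + (mu t) ^ 2) / (2 * p₆) := by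
  have hzero : ∀ t, HasDerivAt (fun s => deriv φ s - ((lam s) ^ 2 + (mu s) ^ 2) / (2 * p₆)) 0 t :=
    fun t => by
      simpa using (hφ2 t).fun_sub (hasDerivAt_sq_add_sq_div_two_mul hp₆ (hlam t) (hmu t))
  refine ⟨hzero, deriv φ 0 - ((lam 0) ^ 2 + (mu 0) ^ 2) / (2 * p₆), fun t => ?_⟩
  have hconst := is_const_of_deriv_eq_zero (fun s => (hzero s).differentiableAt)
    (fun s => (hzero s).deriv) t 0
  linarith

/-- If λ̇ = p₆ sin φ, μ̇ = p₆ cos φ and φ̈ = λ sin φ + μ cos φ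
with p₆ ≠ 0 constant, then φ̇ - (λ² + μ²)/(2p₆) is constant, i.e.
φ̇ = K + (λ² + μ²)/(2p₆) for some constant K. -/
theorem stmt4 (p₆ : ℝ) (hp₆ : p₆ ≠ 0) (lam mu φ : ℝ → ℝ)
    (hlam : ∀ t, HasDerivAt lam (p₆ * Real.sin (φ t)) t)
    (hmu : ∀ t, HasDerivAt mu (p₆ * Real.cos (φ t)) t)
    (hφ : Differentiable ℝ φ)
    (hφ2 : ∀ t, HasDerivAt (deriv φ) (lam t * Real.sin (φ t) + mu t * Real.cos (φ t)) t) :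
    (∀ t, HasDerivAt (fun s => deriv φ s - ((lam s) ^ 2 + (mu s) ^ 2) / (2 * p₆)) 0 t) ∧
    ∃ K : ℝ, ∀ t, deriv φ t = K + ((lam t) ^ 2 + (mu t) ^ 2) / (2 * p₆) :=
  stmt4_general p₆ hp₆ lam mu φ hlam hmu hφ2
end

section
/- Define λ̄ = λ cos φ - μ sin φ and μ̄ = λ sin φ + μ cos φ, where λ, μ, φ satisfy λ̇ = p₆ sin φ, μ̇ = p₆ cos φ, φ̇ = K + (1/(2p₆))(λ² + μ²). Then λ̄² + μ̄² = λ² + μ², and (λ̄, μ̄) satisfy the planar system dλ̄/dt = -μ̄(K + (1/(2p₆))(λ̄² + μ̄²)), dμ̄/dt = p₆ + λ̄(K + (1/(2p₆))(λ̄² + μ̄²)), and the function H₁(λ̄, μ̄) = -p₆λ̄ - (p₆/2)(K + (1/(2p₆))(λ̄² + μ̄²))² satisfies dH₁/dt = 0 along solutions. -/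
/-- With λ̄ = λ cos φ - μ sin φ, μ̄ = λ sin φ + μ cos φ, where
λ̇ = p₆ sin φ, μ̇ = p₆ cos φ, φ̇ = K + (1/(2p₆))(λ² + μ²), one has
λ̄² + μ̄² = λ² + μ², the planar system
dλ̄/dt = -μ̄(K + (1/(2p₆))(λ̄² + μ̄²)), dμ̄/dt = p₆ + λ̄(K + (1/(2p₆))(λ̄² + μ̄²)),
and the Hamiltonian H₁(λ̄,μ̄) = -p₆λ̄ - (p₆/2)(K + (1/(2p₆))(λ̄² + μ̄²))² is
conserved along solutions. -/
theorem stmt5 (K p₆ : ℝ) (hp₆ : p₆ ≠ 0) (lam mu φ : ℝ → ℝ)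
    (hlam : ∀ t, HasDerivAt lam (p₆ * Real.sin (φ t)) t)
    (hmu : ∀ t, HasDerivAt mu (p₆ * Real.cos (φ t)) t)
    (hφ : ∀ t, HasDerivAt φ (K + (1 / (2 * p₆)) * ((lam t) ^ 2 + (mu t) ^ 2)) t)
    (lamb mub : ℝ → ℝ)
    (hlamb : lamb = fun t => lam t * Real.cos (φ t) - mu t * Real.sin (φ t))
    (hmub : mub = fun t => lam t * Real.sin (φ t) + mu t * Real.cos (φ t))
    (H₁ : ℝ → ℝ → ℝ)
    (hH₁ : H₁ = fun a b => -(p₆ * a) - (p₆ / 2) * (K + (1 / (2 * p₆)) * (a ^ 2 + b ^ 2)) ^ 2) :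
    ∀ t, (lamb t) ^ 2 + (mub t) ^ 2 = (lam t) ^ 2 + (mu t) ^ 2 ∧
      HasDerivAt lamb (-(mub t) * (K + (1 / (2 * p₆)) * ((lamb t) ^ 2 + (mub t) ^ 2))) t ∧
      HasDerivAt mub (p₆ + lamb t * (K + (1 / (2 * p₆)) * ((lamb t) ^ 2 + (mub t) ^ 2))) t ∧
      HasDerivAt (fun s => H₁ (lamb s) (mub s)) 0 t := by
  subst hlamb hmub hH₁
  have hsq : ∀ t, (lam t * Real.cos (φ t) - mu t * Real.sin (φ t)) ^ 2 +
      (lam t * Real.sin (φ t) + mu t * Real.cos (φ t)) ^ 2 = (lam t) ^ 2 + (mu t) ^ 2 := by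
    intro t
    have h := Real.sin_sq_add_cos_sq (φ t)
    nlinarith [h]
  have hL : ∀ t, HasDerivAt (fun t => lam t * Real.cos (φ t) - mu t * Real.sin (φ t))
      (-(lam t * Real.sin (φ t) + mu t * Real.cos (φ t)) *
        (K + (1 / (2 * p₆)) * ((lam t * Real.cos (φ t) - mu t * Real.sin (φ t)) ^ 2 +
          (lam t * Real.sin (φ t) + mu t * Real.cos (φ t)) ^ 2))) t := by
    intro t
    have h := ((hlam t).mul ((hφ t).cos)).sub ((hmu t).mul ((hφ t).sin))
    refine h.congr_deriv (Eq.symm ?_)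
    rw [hsq t]
    ring
  have hM : ∀ t, HasDerivAt (fun t => lam t * Real.sin (φ t) + mu t * Real.cos (φ t))
      (p₆ + (lam t * Real.cos (φ t) - mu t * Real.sin (φ t)) *
        (K + (1 / (2 * p₆)) * ((lam t * Real.cos (φ t) - mu t * Real.sin (φ t)) ^ 2 +
          (lam t * Real.sin (φ t) + mu t * Real.cos (φ t)) ^ 2))) t := by
    intro t
    have h := ((hlam t).mul ((hφ t).sin)).add ((hmu t).mul ((hφ t).cos))
    refine h.congr_deriv (Eq.symm ?_)
    rw [hsq t]
    have h2 := Real.sin_sq_add_cos_sq (φ t)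
    linear_combination (-p₆) * h2
  intro t
  refine ⟨hsq t, hL t, hM t, ?_⟩
  set a : ℝ → ℝ := fun t => lam t * Real.cos (φ t) - mu t * Real.sin (φ t) with ha
  set b : ℝ → ℝ := fun t => lam t * Real.sin (φ t) + mu t * Real.cos (φ t) with hb
  set Φ : ℝ := K + (1 / (2 * p₆)) * ((a t) ^ 2 + (b t) ^ 2) with hΦ
  have hLt : HasDerivAt a (-(b t) * Φ) t := hL t
  have hMt : HasDerivAt b (p₆ + a t * Φ) t := hM t
  have h : HasDerivAt (fun s => -(p₆ * a s) - (p₆ / 2) * (K + (1 / (2 * p₆)) * ((a s) ^ 2 + (b s) ^ 2)) ^ 2)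
      (-(p₆ * (-(b t) * Φ)) - (p₆ / 2) * (2 * (K + (1 / (2 * p₆)) * ((a t) ^ 2 + (b t) ^ 2)) ^ 1 *
        ((1 / (2 * p₆)) * (2 * (a t) ^ 1 * (-(b t) * Φ) + 2 * (b t) ^ 1 * (p₆ + a t * Φ))))) t := by
    exact ((hLt.const_mul p₆).neg).sub
      ((((((hLt.pow 2).add (hMt.pow 2)).const_mul (1 / (2 * p₆))).const_add K).pow 2).const_mul (p₆ / 2))
  convert h using 1
  rw [← hΦ]
  field_simp
  ring
end

section
/- For the car with a trailer on ℝ⁴ with coordinates (x, y, θ, φ) and vector fields F₁ = cos θ ∂/∂x + sin θ ∂/∂y + ∂/∂φ, F₂ = ∂/∂θ - sin φ ∂/∂φ, the iterated brackets satisfy: F₁, F₂, [F₁, F₂], [F₂, [F₁, F₂]] span ℝ⁴ at every point where cos φ ≠ 0 — more precisely, the Lie algebra generated by F₁ and F₂ spans ℝ⁴ at every point (the system is completely nonholonomic). -/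
/-!
Explicitly, `[F₁, F₂] = (sin θ, -cos θ, 0, -cos φ)` and `[F₂, [F₁, F₂]] = (cos θ, sin θ, 0, -1)`.
Hence `F₁ - [F₂, [F₁, F₂]] = 2 ∂φ`; modulo `∂φ`, `F₂` is `∂θ`, while `F₁` and `[F₁, F₂]` are the
orthonormal pair `(cos θ, sin θ)`, `(sin θ, -cos θ)` of the `(x, y)`-plane. So already these four
fields form a frame of `ℝ⁴` at every point.
-/

/-- Lie bracket of vector fields on ℝⁿ (identified with maps ℝⁿ → ℝⁿ):
[F,G](p) = DG(p)·F(p) - DF(p)·G(p). -/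
noncomputable def vfBracket {n : ℕ} (F G : (Fin n → ℝ) → (Fin n → ℝ)) :
    (Fin n → ℝ) → (Fin n → ℝ) :=
  fun p => fderiv ℝ G p (F p) - fderiv ℝ F p (G p)

open Real

lemma vfBracket_apply_of_hasFDerivAt {n : ℕ} {F G : (Fin n → ℝ) → (Fin n → ℝ)}
    {F' G' : (Fin n → ℝ) →L[ℝ] (Fin n → ℝ)} {p : Fin n → ℝ}
    (hF : HasFDerivAt F F' p) (hG : HasFDerivAt G G' p) :
    vfBracket F G p = G' (F p) - F' (G p) := by
  rw [vfBracket, hF.fderiv, hG.fderiv]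

lemma HasDerivAt.hasFDerivAt_comp_apply {ι : Type*} [Fintype ι] {g : ℝ → ℝ} {g' : ℝ}
    {p : ι → ℝ} {i : ι} (hg : HasDerivAt g g' (p i)) :
    HasFDerivAt (fun q : ι → ℝ => g (q i)) (g' • ContinuousLinearMap.proj (R := ℝ) i) p :=
  hg.comp_hasFDerivAt p (hasFDerivAt_apply i p)

lemma Submodule.eq_top_of_forall_single_mem {R ι : Type*} [Semiring R] [Fintype ι]
    [DecidableEq ι] {M : Submodule R (ι → R)} (h : ∀ i, Pi.single i 1 ∈ M) : M = ⊤ := by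
  refine eq_top_iff.2 fun x _ => ?_
  rw [← (Pi.basisFun R ι).sum_repr x]
  exact sum_mem fun i _ => M.smul_mem _ (by simpa using h i)

noncomputable def trailerField₁ : (Fin 4 → ℝ) → Fin 4 → ℝ :=
  fun p => ![cos (p 2), sin (p 2), 0, 1]

noncomputable def trailerField₂ : (Fin 4 → ℝ) → Fin 4 → ℝ :=
  fun p => ![0, 0, 1, -sin (p 3)]

noncomputable def trailerField₁₂ : (Fin 4 → ℝ) → Fin 4 → ℝ :=
  fun p => ![sin (p 2), -cos (p 2), 0, -cos (p 3)]

section Derivatives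

open ContinuousLinearMap

lemma hasFDerivAt_trailerField₁ (p : Fin 4 → ℝ) :
    HasFDerivAt trailerField₁
      (pi ![-sin (p 2) • proj (R := ℝ) 2, cos (p 2) • proj (R := ℝ) 2, 0, 0]) p := by
  refine hasFDerivAt_pi'.2 fun i => ?_
  fin_cases i
  · exact (hasDerivAt_cos _).hasFDerivAt_comp_apply
  · exact (hasDerivAt_sin _).hasFDerivAt_comp_apply
  · exact hasFDerivAt_const _ _
  · exact hasFDerivAt_const _ _

lemma hasFDerivAt_trailerField₂ (p : Fin 4 → ℝ) :
    HasFDerivAt trailerField₂ (pi ![0, 0, 0, -cos (p 3) • proj (R := ℝ) 3]) p := by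
  refine hasFDerivAt_pi'.2 fun i => ?_
  fin_cases i
  · exact hasFDerivAt_const _ _
  · exact hasFDerivAt_const _ _
  · exact hasFDerivAt_const _ _
  · exact (hasDerivAt_sin _).neg.hasFDerivAt_comp_apply

lemma hasFDerivAt_trailerField₁₂ (p : Fin 4 → ℝ) :
    HasFDerivAt trailerField₁₂
      (pi ![cos (p 2) • proj (R := ℝ) 2, sin (p 2) • proj (R := ℝ) 2, 0,
        sin (p 3) • proj (R := ℝ) 3]) p := by
  refine hasFDerivAt_pi'.2 fun i => ?_
  fin_cases i
  · exact (hasDerivAt_sin _).hasFDerivAt_comp_apply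
  · simpa [trailerField₁₂] using (hasDerivAt_cos _).neg.hasFDerivAt_comp_apply
  · exact hasFDerivAt_const _ _
  · simpa [trailerField₁₂] using (hasDerivAt_cos _).neg.hasFDerivAt_comp_apply

end Derivatives

lemma vfBracket_trailerField₁_trailerField₂ :
    vfBracket trailerField₁ trailerField₂ = trailerField₁₂ := by
  funext p
  rw [vfBracket_apply_of_hasFDerivAt (hasFDerivAt_trailerField₁ p) (hasFDerivAt_trailerField₂ p)]
  ext i
  fin_cases i <;> simp [trailerField₁, trailerField₂, trailerField₁₂]

lemma vfBracket_trailerField₂_trailerField₁₂ (p : Fin 4 → ℝ) :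
    vfBracket trailerField₂ trailerField₁₂ p = ![cos (p 2), sin (p 2), 0, -1] := by
  rw [vfBracket_apply_of_hasFDerivAt (hasFDerivAt_trailerField₂ p) (hasFDerivAt_trailerField₁₂ p)]
  ext i
  fin_cases i <;> simp [trailerField₂, trailerField₁₂]
  linear_combination -sin_sq_add_cos_sq (p 3)

lemma trailer_frame_span_eq_top {M : Submodule ℝ (Fin 4 → ℝ)} {θ φ : ℝ}
    (h₁ : ![cos θ, sin θ, 0, 1] ∈ M) (h₂ : ![0, 0, 1, -sin φ] ∈ M)
    (h₁₂ : ![sin θ, -cos θ, 0, -cos φ] ∈ M) (h₂₁₂ : ![cos θ, sin θ, 0, -1] ∈ M) :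
    M = ⊤ := by
  have e₃ : Pi.single 3 1 ∈ M := by
    convert M.smul_mem (2⁻¹ : ℝ) (M.sub_mem h₁ h₂₁₂) using 1
    ext i; fin_cases i <;> simp; norm_num
  have e₂ : Pi.single 2 1 ∈ M := by
    convert M.add_mem h₂ (M.smul_mem (sin φ) e₃) using 1
    ext i; fin_cases i <;> simp
  have u : ![cos θ, sin θ, 0, 0] ∈ M := by
    convert M.sub_mem h₁ e₃ using 1
    ext i; fin_cases i <;> simp
  have w : ![sin θ, -cos θ, 0, 0] ∈ M := by
    convert M.add_mem h₁₂ (M.smul_mem (cos φ) e₃) using 1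
    ext i; fin_cases i <;> simp
  have e₀ : Pi.single 0 1 ∈ M := by
    convert M.add_mem (M.smul_mem (cos θ) u) (M.smul_mem (sin θ) w) using 1
    ext i; fin_cases i <;> simp <;> linarith [sin_sq_add_cos_sq θ]
  have e₁ : Pi.single 1 1 ∈ M := by
    convert M.sub_mem (M.smul_mem (sin θ) u) (M.smul_mem (cos θ) w) using 1
    ext i; fin_cases i <;> simp <;> linarith [sin_sq_add_cos_sq θ]
  refine Submodule.eq_top_of_forall_single_mem fun i => ?_
  fin_cases i
  exacts [e₀, e₁, e₂, e₃]

lemma span_trailer_brackets_eq_top (p : Fin 4 → ℝ) :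
    Submodule.span ℝ ({trailerField₁ p, trailerField₂ p, vfBracket trailerField₁ trailerField₂ p,
      vfBracket trailerField₂ (vfBracket trailerField₁ trailerField₂) p} : Set (Fin 4 → ℝ)) =
      ⊤ := by
  rw [vfBracket_trailerField₁_trailerField₂, vfBracket_trailerField₂_trailerField₁₂]
  exact trailer_frame_span_eq_top (θ := p 2) (φ := p 3)
    (Submodule.subset_span (by simp [trailerField₁]))
    (Submodule.subset_span (by simp [trailerField₂]))
    (Submodule.subset_span (by simp [trailerField₁₂]))
    (Submodule.subset_span (by simp))

/-- For the car with a trailer on ℝ⁴, coordinates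
(x,y,θ,φ) = (p 0, p 1, p 2, p 3), with F₁ = cos θ ∂x + sin θ ∂y + ∂φ and
F₂ = ∂θ - sin φ ∂φ: the fields F₁, F₂, [F₁,F₂], [F₂,[F₁,F₂]] span ℝ⁴ at every
point where cos φ ≠ 0; more precisely, the Lie algebra generated by F₁, F₂
(already its iterated brackets up to order 3) spans ℝ⁴ at every point of ℝ⁴:
the system is completely nonholonomic. -/
theorem stmt7 (F₁ F₂ : (Fin 4 → ℝ) → (Fin 4 → ℝ))
    (hF₁ : F₁ = fun p => ![Real.cos (p 2), Real.sin (p 2), 0, 1])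
    (hF₂ : F₂ = fun p => ![0, 0, 1, -Real.sin (p 3)]) :
    (∀ p : Fin 4 → ℝ, Real.cos (p 3) ≠ 0 →
      Submodule.span ℝ
        ({F₁ p, F₂ p, vfBracket F₁ F₂ p, vfBracket F₂ (vfBracket F₁ F₂) p} :
          Set (Fin 4 → ℝ)) = ⊤) ∧
    (∀ p : Fin 4 → ℝ,
      Submodule.span ℝ
        ({F₁ p, F₂ p, vfBracket F₁ F₂ p, vfBracket F₁ (vfBracket F₁ F₂) p,
          vfBracket F₂ (vfBracket F₁ F₂) p} : Set (Fin 4 → ℝ)) = ⊤) := by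
  obtain rfl : F₁ = trailerField₁ := hF₁
  obtain rfl : F₂ = trailerField₂ := hF₂
  refine ⟨fun p _ => span_trailer_brackets_eq_top p, fun p => top_unique ?_⟩
  rw [← span_trailer_brackets_eq_top p]
  refine Submodule.span_mono fun x hx => ?_
  simp only [Set.mem_insert_iff, Set.mem_singleton_iff] at hx ⊢
  tauto
end

section
/- Let A₁, A₂, A₃ denote the standard basis of so(3) (infinitesimal rotations) with bracket relations [A₁, A₂] = A₃, [A₁, A₃] = -A₂, [A₂, A₃] = A₁. For the ball-with-trailer vector fields F₁ = ∂/∂x₁ + A₁ - (1/L)cos θ ∂/∂θ and F₂ = ∂/∂x₂ + A₂ - (1/L)sin θ ∂/∂θ on ℝ² × SO(3) × S¹, setting H = [F₁, F₂], I = [F₁, H], J = [F₂, H], one has: H = A₃ - (1/L²) ∂/∂θ, I = -A₂ - (1/L³) sin θ ∂/∂θ, J = A₁ + (1/L³) cos θ ∂/∂θ, [F₁, I] = -A₃ - (1/L⁴) ∂/∂θ, [F₁, J] = 0, [F₂, I] = 0, [F₂, J] = -A₃ - (1/L⁴) ∂/∂θ. -/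
/-- Vector fields on the (x₁,x₂,θ)-factor ℝ³, identified with maps ℝ³ → ℝ³. -/
abbrev VF3 := (Fin 3 → ℝ) → (Fin 3 → ℝ)

/-- Bracket of coordinate-part vector fields (with the paper's sign convention
for right-invariant frames). -/
noncomputable def vfBr (X Y : VF3) : VF3 :=
  fun p => fderiv ℝ X p (Y p) - fderiv ℝ Y p (X p)

/-- The total state space: an so(3)-component (ℝ³ with the cross-product bracket,
modelling the right-invariant fields A₁, A₂, A₃ on SO(3), which commute with the
coordinate fields on the (x₁,x₂,θ)-factor) together with a vector field on ℝ³. -/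
abbrev BallVF := (Fin 3 → ℝ) × VF3

/-- Bracket on `BallVF`: cross product on the so(3)-part (so that
[A₁,A₂] = A₃, [A₁,A₃] = -A₂, [A₂,A₃] = A₁), `vfBr` on the coordinate part. -/
noncomputable def pbr (F G : BallVF) : BallVF :=
  (crossProduct F.1 G.1, vfBr F.2 G.2)

/-!
All the fields involved lie in the span of `A₁, A₂, A₃, ∂x₁, ∂x₂, cos θ ∂θ, sin θ ∂θ, ∂θ`, and the
bracket maps this span into itself: the so(3)-parts bracket by the cross product, and the θ-parts
`g ∂θ`, `h ∂θ` give `(g' h - h' g) ∂θ`, which for `g, h` in the span of `cos, sin, 1` is again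
there by `sin² + cos² = 1`. Every bracket of the statement is then coefficient arithmetic.
-/

open Real Matrix

def thetaField (a b : ℝ) (g : ℝ → ℝ) : VF3 := fun p => ![a, b, g (p 2)]

theorem hasFDerivAt_thetaField (a b : ℝ) {g : ℝ → ℝ} {g' : ℝ} {p : Fin 3 → ℝ}
    (hg : HasDerivAt g g' (p 2)) :
    HasFDerivAt (thetaField a b g)
      (ContinuousLinearMap.pi ![0, 0, g' • ContinuousLinearMap.proj (R := ℝ) 2]) p := by
  rw [hasFDerivAt_pi']
  intro i
  fin_cases i
  · exact hasFDerivAt_const _ _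
  · exact hasFDerivAt_const _ _
  · exact hg.comp_hasFDerivAt p
      (ContinuousLinearMap.proj (R := ℝ) (φ := fun _ : Fin 3 => ℝ) 2).hasFDerivAt

theorem vfBr_thetaField (a₁ a₂ b₁ b₂ : ℝ) {g h : ℝ → ℝ}
    (hg : Differentiable ℝ g) (hh : Differentiable ℝ h) :
    vfBr (thetaField a₁ a₂ g) (thetaField b₁ b₂ h) =
      thetaField 0 0 (deriv g * h - deriv h * g) := by
  funext p
  rw [vfBr, (hasFDerivAt_thetaField a₁ a₂ (hg (p 2)).hasDerivAt).fderiv,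
    (hasFDerivAt_thetaField b₁ b₂ (hh (p 2)).hasDerivAt).fderiv]
  ext i
  fin_cases i <;> simp [thetaField, mul_comm]

/-- The field `v • A + a ∂x₁ + b ∂x₂ + (α cos θ + β sin θ + γ) ∂θ`. -/
noncomputable def trigField (v : Fin 3 → ℝ) (a b α β γ : ℝ) : BallVF :=
  (v, thetaField a b fun t => α * cos t + β * sin t + γ)

theorem mk_eq_trigField {v : Fin 3 → ℝ} {f : VF3} {a b α β γ : ℝ}
    (hf : ∀ p, f p = ![a, b, α * cos (p 2) + β * sin (p 2) + γ]) :
    (v, f) = trigField v a b α β γ :=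
  Prod.ext rfl (funext hf)

theorem trigField_add (v w : Fin 3 → ℝ) (a b α β γ a' b' α' β' γ' : ℝ) :
    trigField v a b α β γ + trigField w a' b' α' β' γ' =
      trigField (v + w) (a + a') (b + b') (α + α') (β + β') (γ + γ') := by
  refine Prod.ext rfl (funext fun p => ?_)
  ext i
  fin_cases i <;> simp [trigField, thetaField]
  ring

theorem trigField_neg (v : Fin 3 → ℝ) (a b α β γ : ℝ) :
    -trigField v a b α β γ = trigField (-v) (-a) (-b) (-α) (-β) (-γ) := by
  refine Prod.ext rfl (funext fun p => ?_)
  ext i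
  fin_cases i <;> simp [trigField, thetaField]
  ring

theorem trigField_smul (c : ℝ) (v : Fin 3 → ℝ) (a b α β γ : ℝ) :
    c • trigField v a b α β γ = trigField (c • v) (c * a) (c * b) (c * α) (c * β) (c * γ) := by
  refine Prod.ext rfl (funext fun p => ?_)
  ext i
  fin_cases i <;> simp [trigField, thetaField]
  ring

theorem hasDerivAt_trig (α β γ t : ℝ) :
    HasDerivAt (fun t => α * cos t + β * sin t + γ) (-α * sin t + β * cos t) t := by
  simpa [neg_mul, ← sub_eq_add_neg] using
    (((hasDerivAt_cos t).const_mul α).add ((hasDerivAt_sin t).const_mul β)).add_const γ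

theorem pbr_trigField (v w : Fin 3 → ℝ) (a b α β γ a' b' α' β' γ' : ℝ) :
    pbr (trigField v a b α β γ) (trigField w a' b' α' β' γ') =
      trigField (v ⨯₃ w) 0 0 (β * γ' - β' * γ) (α' * γ - α * γ') (α' * β - α * β') := by
  have hd : ∀ α β γ : ℝ, Differentiable ℝ fun t => α * cos t + β * sin t + γ :=
    fun α β γ t => (hasDerivAt_trig α β γ t).differentiableAt
  rw [pbr, trigField, trigField, vfBr_thetaField _ _ _ _ (hd α β γ) (hd α' β' γ'), trigField]
  congr 2
  funext t
  simp only [Pi.sub_apply, Pi.mul_apply, (hasDerivAt_trig _ _ _ t).deriv]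
  linear_combination (α' * β - α * β') * sin_sq_add_cos_sq t

theorem stmt9_general (L : ℝ)
    (A₁ A₂ A₃ Dθ F₁ F₂ : BallVF)
    (hA₁ : A₁ = (![1, 0, 0], 0)) (hA₂ : A₂ = (![0, 1, 0], 0))
    (hA₃ : A₃ = (![0, 0, 1], 0))
    (hDθ : Dθ = (0, fun _ => ![0, 0, 1]))
    (hF₁ : F₁ = (![1, 0, 0], fun p => ![1, 0, -(1 / L) * Real.cos (p 2)]))
    (hF₂ : F₂ = (![0, 1, 0], fun p => ![0, 1, -(1 / L) * Real.sin (p 2)]))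
    (H I J : BallVF)
    (hH : H = pbr F₁ F₂) (hI : I = pbr F₁ H) (hJ : J = pbr F₂ H) :
    pbr A₁ A₂ = A₃ ∧ pbr A₁ A₃ = -A₂ ∧ pbr A₂ A₃ = A₁ ∧
    H = A₃ - (1 / L ^ 2) • Dθ ∧
    I = -A₂ - (1 / L ^ 3) • ((0 : Fin 3 → ℝ), fun p : Fin 3 → ℝ => ![0, 0, Real.sin (p 2)]) ∧
    J = A₁ + (1 / L ^ 3) • ((0 : Fin 3 → ℝ), fun p : Fin 3 → ℝ => ![0, 0, Real.cos (p 2)]) ∧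
    pbr F₁ I = -A₃ - (1 / L ^ 4) • Dθ ∧
    pbr F₁ J = 0 ∧ pbr F₂ I = 0 ∧
    pbr F₂ J = -A₃ - (1 / L ^ 4) • Dθ := by
  have hA₁' : A₁ = trigField ![1, 0, 0] 0 0 0 0 0 := hA₁ ▸ mk_eq_trigField fun _ => by
    simp [← Matrix.zero_empty]
  have hA₂' : A₂ = trigField ![0, 1, 0] 0 0 0 0 0 := hA₂ ▸ mk_eq_trigField fun _ => by
    simp [← Matrix.zero_empty]
  have hA₃' : A₃ = trigField ![0, 0, 1] 0 0 0 0 0 := hA₃ ▸ mk_eq_trigField fun _ => by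
    simp [← Matrix.zero_empty]
  have hDθ' : Dθ = trigField 0 0 0 0 0 1 := hDθ ▸ mk_eq_trigField fun _ => by simp
  have hF₁' : F₁ = trigField ![1, 0, 0] 1 0 (-(1 / L)) 0 0 :=
    hF₁ ▸ mk_eq_trigField fun _ => by simp
  have hF₂' : F₂ = trigField ![0, 1, 0] 0 1 0 (-(1 / L)) 0 :=
    hF₂ ▸ mk_eq_trigField fun _ => by simp
  have hsin : ((0 : Fin 3 → ℝ), fun p : Fin 3 → ℝ => ![0, 0, Real.sin (p 2)]) =
      trigField 0 0 0 0 1 0 := mk_eq_trigField fun _ => by simp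
  have hcos : ((0 : Fin 3 → ℝ), fun p : Fin 3 → ℝ => ![0, 0, Real.cos (p 2)]) =
      trigField 0 0 0 1 0 0 := mk_eq_trigField fun _ => by simp
  have hzero : (0 : BallVF) = trigField 0 0 0 0 0 0 := mk_eq_trigField fun _ => by
    simp [← Matrix.zero_empty]
  subst hH hI hJ
  rw [hsin, hcos, hzero, hA₁', hA₂', hA₃', hDθ', hF₁', hF₂']
  simp only [pbr_trigField, sub_eq_add_neg, trigField_neg, trigField_smul, trigField_add]
  refine ⟨?_, ?_, ?_, ?_, ?_, ?_, ?_, ?_, ?_, ?_⟩ <;> congr 1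
  all_goals first | (simp [cross_apply]; done) | ring

/-- For the ball with a trailer, with
F₁ = ∂x₁ + A₁ - (1/L) cos θ ∂θ and F₂ = ∂x₂ + A₂ - (1/L) sin θ ∂θ
(θ = third coordinate p 2), setting H = [F₁,F₂], I = [F₁,H], J = [F₂,H]:
H = A₃ - (1/L²)∂θ, I = -A₂ - (1/L³) sin θ ∂θ, J = A₁ + (1/L³) cos θ ∂θ,
[F₁,I] = -A₃ - (1/L⁴)∂θ, [F₁,J] = 0, [F₂,I] = 0, [F₂,J] = -A₃ - (1/L⁴)∂θ. -/
theorem stmt9 (L : ℝ) (hL : 0 < L)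
    (A₁ A₂ A₃ Dθ F₁ F₂ : BallVF)
    (hA₁ : A₁ = (![1, 0, 0], 0)) (hA₂ : A₂ = (![0, 1, 0], 0))
    (hA₃ : A₃ = (![0, 0, 1], 0))
    (hDθ : Dθ = (0, fun _ => ![0, 0, 1]))
    (hF₁ : F₁ = (![1, 0, 0], fun p => ![1, 0, -(1 / L) * Real.cos (p 2)]))
    (hF₂ : F₂ = (![0, 1, 0], fun p => ![0, 1, -(1 / L) * Real.sin (p 2)]))
    (H I J : BallVF)
    (hH : H = pbr F₁ F₂) (hI : I = pbr F₁ H) (hJ : J = pbr F₂ H) :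
    pbr A₁ A₂ = A₃ ∧ pbr A₁ A₃ = -A₂ ∧ pbr A₂ A₃ = A₁ ∧
    H = A₃ - (1 / L ^ 2) • Dθ ∧
    I = -A₂ - (1 / L ^ 3) • ((0 : Fin 3 → ℝ), fun p : Fin 3 → ℝ => ![0, 0, Real.sin (p 2)]) ∧
    J = A₁ + (1 / L ^ 3) • ((0 : Fin 3 → ℝ), fun p : Fin 3 → ℝ => ![0, 0, Real.cos (p 2)]) ∧
    pbr F₁ I = -A₃ - (1 / L ^ 4) • Dθ ∧
    pbr F₁ J = 0 ∧ pbr F₂ I = 0 ∧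
    pbr F₂ J = -A₃ - (1 / L ^ 4) • Dθ :=
  stmt9_general L A₁ A₂ A₃ Dθ F₁ F₂ hA₁ hA₂ hA₃ hDθ hF₁ hF₂ H I J hH hI hJ
end
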